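/- arXiv:1803.08352 — 2 statements merged into one kernel-verified Lean document; each statement's English description precedes it below -/
import Mathlib

section
/- If a probability measure ν on X is a weak-* limit of a sequence of Borel probability measures (μ_k), and if there exist ε > 0, s ≥ 0, K > 0, and N ∈ ℕ such that limsup_{k→∞} μ_k(B_n(x,ε)) ≤ K·exp(−s n) for every Bowen ball B_n(x,ε) with n ≥ N intersecting a Borel set Z, and ν(Z) > 0, then the Bowen topological entropy of Z at scale ε satisfies h_top^B(Z,ε) ≥ s. -/
open Filter Topology MeasureTheory Set
open scoped ENNReal NNReal

variable {X : Type*}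

/-- The (open) Bowen ball of order `n` and radius `ε` centred at `x`. -/
def bowenBall [PseudoMetricSpace X] (T : X → X) (n : ℕ) (x : X) (ε : ℝ) : Set X :=
  {y | ∀ i < n, dist (T^[i] x) (T^[i] y) < ε}

/-- The closed Bowen ball of order `n` and radius `ε` centred at `x`. -/
def closedBowenBall [PseudoMetricSpace X] (T : X → X) (n : ℕ) (x : X) (ε : ℝ) : Set X :=
  {y | ∀ i < n, dist (T^[i] x) (T^[i] y) ≤ ε}

/-- Generalized Bowen ball `B(c 0, …, c (n-1); ε)`. -/
def genBall [PseudoMetricSpace X] (T : X → X) (n : ℕ) (c : ℕ → X) (ε : ℝ) : Set X :=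
  {y | ∀ i < n, dist (T^[i] y) (c i) < ε}

/-- Pesin–Pitskel outer quantity `M(φ, Z, s, ε, N)` via covers by Bowen balls. -/
noncomputable def ppM [PseudoMetricSpace X] (T : X → X) (φ : X → ℝ) (Z : Set X)
    (s ε : ℝ) (N : ℕ) : ℝ≥0∞ :=
  ⨅ (c : ℕ → X) (n : ℕ → ℕ) (_ : ∀ i, N ≤ n i)
    (_ : Z ⊆ ⋃ i, bowenBall T (n i) (c i) ε),
    ∑' i, ENNReal.ofReal
      (Real.exp (-s * n i +
        sSup ((fun y => birkhoffSum T φ (n i) y) '' bowenBall T (n i) (c i) ε)))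

/-- `M(φ, Z, s, ε) = lim_{N → ∞} M(φ, Z, s, ε, N)` (the quantity is nondecreasing in `N`). -/
noncomputable def ppMLim [PseudoMetricSpace X] (T : X → X) (φ : X → ℝ) (Z : Set X)
    (s ε : ℝ) : ℝ≥0∞ :=
  ⨆ N : ℕ, ppM T φ Z s ε N

/-- Pesin–Pitskel topological pressure of `φ` on `Z` at scale `ε`: critical value of `s`. -/
noncomputable def ppPressureAt [PseudoMetricSpace X] (T : X → X) (φ : X → ℝ) (Z : Set X)
    (ε : ℝ) : ℝ :=
  sInf {s : ℝ | ppMLim T φ Z s ε = 0}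

/-- Pesin–Pitskel topological pressure of `φ` on `Z`: `lim_{ε → 0}` (equivalently, `sup` over
`ε > 0`, by monotonicity) of the pressure at scale `ε`. -/
noncomputable def ppPressure [PseudoMetricSpace X] (T : X → X) (φ : X → ℝ) (Z : Set X) : ℝ :=
  ⨆ (ε : ℝ) (_ : 0 < ε), ppPressureAt T φ Z ε

/-- Bowen topological entropy of `Z` at scale `ε`. -/
noncomputable def bowenEntropyAt [PseudoMetricSpace X] (T : X → X) (Z : Set X) (ε : ℝ) : ℝ :=
  ppPressureAt T (fun _ => 0) Z ε

/-- Bowen (Pesin–Pitskel) topological entropy of an arbitrary subset `Z`. -/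
noncomputable def bowenEntropy [PseudoMetricSpace X] (T : X → X) (Z : Set X) : ℝ :=
  ppPressure T (fun _ => 0) Z

/-- `F` is an `(n, ε)`-spanning set for `Z`. -/
def IsSpanningSet [PseudoMetricSpace X] (T : X → X) (n : ℕ) (ε : ℝ) (F : Finset X)
    (Z : Set X) : Prop :=
  Z ⊆ ⋃ x ∈ F, bowenBall T n x ε

/-- `E` is an `(n, ε)`-separated set (distinct points are `ε`-apart in the Bowen metric `d_n`). -/
def IsSeparatedSet [PseudoMetricSpace X] (T : X → X) (n : ℕ) (ε : ℝ) (E : Finset X) : Prop :=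
  ∀ x ∈ E, ∀ y ∈ E, x ≠ y → ∃ i < n, ε ≤ dist (T^[i] x) (T^[i] y)

/-- `Q_n(T, φ, ε)`: classical pressure partition function over spanning sets. -/
noncomputable def classQ [PseudoMetricSpace X] (T : X → X) (φ : X → ℝ) (n : ℕ) (ε : ℝ) : ℝ :=
  sInf {q : ℝ | ∃ F : Finset X, IsSpanningSet T n ε F Set.univ ∧
    q = ∑ x ∈ F, Real.exp (sInf ((fun y => birkhoffSum T φ n y) '' bowenBall T n x ε))}

/-- Classical topological pressure `P(φ)`. -/
noncomputable def classPressure [PseudoMetricSpace X] (T : X → X) (φ : X → ℝ) : ℝ :=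
  ⨆ (ε : ℝ) (_ : 0 < ε), Filter.atTop.limsup (fun n : ℕ => Real.log (classQ T φ n ε) / n)

/-- Classical topological entropy `h_top(T) = P(0)`. -/
noncomputable def topEntropy [PseudoMetricSpace X] (T : X → X) : ℝ :=
  classPressure T (fun _ => 0)

/-- Entropy of the refined partition `⋁_{i<n} T^{-i} P` with respect to `μ`. -/
noncomputable def joinEntropy [MeasurableSpace X] (μ : Measure X) (T : X → X)
    (P : Finset (Set X)) (n : ℕ) : ℝ :=
  letI := Classical.decEq (Set X)
  ∑ A ∈ (Finset.univ : Finset (Fin n → {A // A ∈ P})).image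
      (fun f => ⋂ i : Fin n, T^[(i : ℕ)] ⁻¹' ((f i : Set X))),
    Real.negMulLog (μ A).toReal

/-- A finite measurable partition of `X`. -/
def IsMeasPartition [MeasurableSpace X] (P : Finset (Set X)) : Prop :=
  (∀ A ∈ P, MeasurableSet A) ∧ (⋃ A ∈ P, A) = Set.univ ∧
    ∀ A ∈ P, ∀ B ∈ P, A ≠ B → A ∩ B = ∅

/-- Kolmogorov–Sinai (measure-theoretic) entropy `h_μ(T)`. -/
noncomputable def ksEntropy [MeasurableSpace X] (μ : Measure X) (T : X → X) : ℝ :=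
  sSup {h : ℝ | ∃ P : Finset (Set X), IsMeasPartition P ∧
    h = Filter.atTop.liminf (fun n : ℕ => joinEntropy μ T P n / n)}

/-- `m` is a specification constant for `T` at scale `ε`. -/
def SpecAt [PseudoMetricSpace X] (T : X → X) (ε : ℝ) (m : ℕ) : Prop :=
  ∀ k : ℕ, ∀ a b : ℕ → ℕ,
    (∀ j < k, a j ≤ b j) →
    (∀ j, j + 1 < k → b j + m ≤ a (j + 1)) →
    ∀ x : ℕ → X, ∃ y : X, ∀ j < k, ∀ p ≤ b j - a j,
      dist (T^[p + a j] y) (T^[p] (x j)) < ε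

/-- The specification property. -/
def Specification [PseudoMetricSpace X] (T : X → X) : Prop :=
  ∀ ε : ℝ, 0 < ε → ∃ m : ℕ, SpecAt T ε m

/-- `max {t : ℕ | T^[n] x ∈ B_t(x₀, ε)}`, the shadowing time. -/
noncomputable def shadowTime [PseudoMetricSpace X] (T : X → X) (x₀ : X) (ε : ℝ) (n : ℕ)
    (x : X) : ℕ :=
  sSup {t : ℕ | T^[n] x ∈ bowenBall T t x₀ ε}

/-- The set `D^{x₀}_f`. Since the inner quantity is monotone in `ε`, the condition
`lim_{ε→0} limsup_n (…) ≥ 0` is equivalent to: for every `ε > 0` the limsup is `≥ 0`. -/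
def Dset [PseudoMetricSpace X] (T : X → X) (x₀ : X) (f : X → ℝ) : Set X :=
  {x | ∀ ε > 0, 0 ≤ Filter.atTop.limsup
      (fun n : ℕ => ((shadowTime T x₀ ε n x : ℝ) - birkhoffSum T f n x) / n)}

/-- The set `D^{x₀}_α`. -/
def Dalpha [PseudoMetricSpace X] (T : X → X) (x₀ : X) (α : ℝ) : Set X :=
  {x | ∀ ε > 0, α ≤ Filter.atTop.limsup
      (fun n : ℕ => (shadowTime T x₀ ε n x : ℝ) / n)}

/-! Each Bowen ball is open, so by the portmanteau theorem `ν(B) ≤ limsup_k μ_k(B) ≤ K e^{-sn}`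
for the balls of a cover of `Z` of order `≥ N`, and subadditivity gives
`M(0, Z, s, ε, N) ≥ ν(Z) / K > 0`. Since `M` is antitone in `s`, it cannot vanish at any
`s' ≤ s`, so `s` is a lower bound of the critical set. That set is nonempty (otherwise its `sInf`
would be the junk value `0`): coding orbits through a finite `ε/2`-net of `m` points covers `X` by
`m ^ n` Bowen balls of order `n`, which makes `M(0, Z, s₀, ε)` vanish once `e^{-s₀} m ≤ 1/2`. -/

section BowenCovers

variable [PseudoMetricSpace X] {T : X → X}

theorem isOpen_bowenBall (hT : Continuous T) (n : ℕ) (x : X) (ε : ℝ) :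
    IsOpen (bowenBall T n x ε) := by
  have h : bowenBall T n x ε = ⋂ i ∈ Finset.range n, {y | dist (T^[i] x) (T^[i] y) < ε} := by
    ext y; simp [bowenBall]
  rw [h]
  exact isOpen_biInter_finset fun i _ =>
    isOpen_lt (continuous_const.dist (hT.iterate i)) continuous_const

theorem ppM_zero_eq_iInf (Z : Set X) (s ε : ℝ) (N : ℕ) :
    ppM T (fun _ => 0) Z s ε N = ⨅ (c : ℕ → X) (n : ℕ → ℕ) (_ : ∀ i, N ≤ n i)
      (_ : Z ⊆ ⋃ i, bowenBall T (n i) (c i) ε), ∑' i, ENNReal.ofReal (Real.exp (-s * n i)) := by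
  have hsup (n : ℕ) (B : Set X) :
      sSup ((fun y => birkhoffSum T (fun _ => (0 : ℝ)) n y) '' B) = 0 := by
    rcases B.eq_empty_or_nonempty with rfl | hB
    · simp
    · simp [birkhoffSum, hB.image_const]
  simp only [ppM, hsup, add_zero]

theorem ppM_antitone (φ : X → ℝ) (Z : Set X) (ε : ℝ) (N : ℕ) :
    Antitone fun s => ppM T φ Z s ε N := by
  intro s s' hss'
  refine iInf_mono fun c => iInf_mono fun n => iInf₂_mono fun _ _ =>
    ENNReal.tsum_le_tsum fun i => ENNReal.ofReal_le_ofReal (Real.exp_le_exp.2 ?_)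
  have : s * n i ≤ s' * n i := mul_le_mul_of_nonneg_right hss' (Nat.cast_nonneg _)
  linarith

theorem ppM_le_ppMLim (φ : X → ℝ) (Z : Set X) (s ε : ℝ) (N : ℕ) :
    ppM T φ Z s ε N ≤ ppMLim T φ Z s ε :=
  le_iSup (fun N => ppM T φ Z s ε N) N

theorem measure_div_le_ppM [MeasurableSpace X] (ν : Measure X) {Z : Set X} {s ε K : ℝ} {N : ℕ}
    (hν : ∀ x n, N ≤ n → (bowenBall T n x ε ∩ Z).Nonempty →
      ν (bowenBall T n x ε) ≤ ENNReal.ofReal (K * Real.exp (-s * n))) :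
    ν Z / ENNReal.ofReal K ≤ ppM T (fun _ => 0) Z s ε N := by
  rw [ppM_zero_eq_iInf]
  refine le_iInf fun c => le_iInf fun n => le_iInf fun hn => le_iInf fun hcov => ?_
  refine ENNReal.div_le_of_le_mul ?_
  have hball (i : ℕ) : ν (Z ∩ bowenBall T (n i) (c i) ε) ≤
      ENNReal.ofReal (Real.exp (-s * n i)) * ENNReal.ofReal K := by
    rcases (bowenBall T (n i) (c i) ε ∩ Z).eq_empty_or_nonempty with hempty | hmeet
    · simp [inter_comm Z, hempty]
    · rw [mul_comm, ← ENNReal.ofReal_mul' (Real.exp_nonneg _)]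
      exact (measure_mono inter_subset_right).trans (hν _ _ (hn i) hmeet)
  calc ν Z ≤ ν (⋃ i, Z ∩ bowenBall T (n i) (c i) ε) := by
        rw [← inter_iUnion]; exact measure_mono (subset_inter subset_rfl hcov)
    _ ≤ ∑' i, ν (Z ∩ bowenBall T (n i) (c i) ε) := measure_iUnion_le _
    _ ≤ ∑' i, ENNReal.ofReal (Real.exp (-s * n i)) * ENNReal.ofReal K :=
        ENNReal.tsum_le_tsum hball
    _ = _ := ENNReal.tsum_mul_right

theorem exists_isSpanningSet_card_le_pow (hX : TotallyBounded (univ : Set X)) {ε : ℝ}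
    (hε : 0 < ε) : ∃ m : ℕ, ∀ n, ∃ F : Finset X, IsSpanningSet T n ε F univ ∧ F.card ≤ m ^ n := by
  classical
  obtain ⟨t, ht, hnet⟩ := Metric.totallyBounded_iff.1 hX (ε / 2) (half_pos hε)
  lift t to Finset X using ht
  refine ⟨t.card, fun n => ?_⟩
  rcases isEmpty_or_nonempty X with hempty | hne
  · exact ⟨∅, fun x => (IsEmpty.false x).elim, by simp⟩
  have hσ (x : X) : ∃ a : t, dist x a < ε / 2 := by
    obtain ⟨a, ha, hxa⟩ := mem_iUnion₂.1 (hnet (mem_univ x))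
    exact ⟨⟨a, ha⟩, hxa⟩
  choose σ hσ using hσ
  let code : X → Fin n → t := fun y i => σ (T^[i] y)
  refine ⟨Finset.univ.image (Function.invFun code), fun y _ => ?_, ?_⟩
  · have hcode : code (Function.invFun code (code y)) = code y := Function.invFun_eq ⟨y, rfl⟩
    refine mem_iUnion₂.2 ⟨_, Finset.mem_image_of_mem _ (Finset.mem_univ (code y)), fun i hi => ?_⟩
    have hσi : σ (T^[i] (Function.invFun code (code y))) = σ (T^[i] y) := congrFun hcode ⟨i, hi⟩
    calc dist (T^[i] (Function.invFun code (code y))) (T^[i] y)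
        ≤ dist (T^[i] (Function.invFun code (code y))) (σ (T^[i] y)) +
            dist (T^[i] y) (σ (T^[i] y)) := dist_triangle_right _ _ _
      _ < ε / 2 + ε / 2 := add_lt_add (hσi ▸ hσ _) (hσ _)
      _ = ε := add_halves ε
  · exact Finset.card_image_le.trans (by simp)

theorem ppM_zero_le_of_isSpanningSet [Nonempty X] {Z : Set X} {s ε : ℝ} {N n : ℕ} (hn : N ≤ n)
    {F : Finset X} (hF : IsSpanningSet T n ε F Z) :
    ppM T (fun _ => 0) Z s ε N ≤
      (F.card + (1 - ENNReal.ofReal (Real.exp (-s)))⁻¹) * ENNReal.ofReal (Real.exp (-s)) ^ n := by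
  classical
  set r := ENNReal.ofReal (Real.exp (-s))
  have hpow (k : ℕ) : ENNReal.ofReal (Real.exp (-s * k)) = r ^ k := by
    rw [← ENNReal.ofReal_pow (Real.exp_nonneg _), ← Real.exp_nat_mul, mul_comm]
  -- the definition wants a sequence of balls: pad `F` by balls of increasing order
  let c : ℕ → X := fun k =>
    if h : k < F.card then F.equivFin.symm ⟨k, h⟩ else Classical.arbitrary X
  let m : ℕ → ℕ := fun k => if k < F.card then n else n + k
  have hm (k : ℕ) : N ≤ m k := by
    simp only [m]; split_ifs <;> omega
  have hcov : Z ⊆ ⋃ k, bowenBall T (m k) (c k) ε := by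
    intro y hy
    obtain ⟨x, hx, hyx⟩ := mem_iUnion₂.1 (hF hy)
    refine mem_iUnion.2 ⟨F.equivFin ⟨x, hx⟩, ?_⟩
    simpa [c, m] using hyx
  calc ppM T (fun _ => 0) Z s ε N ≤ ∑' k, ENNReal.ofReal (Real.exp (-s * m k)) := by
        rw [ppM_zero_eq_iInf]
        exact iInf_le_of_le c (iInf_le_of_le m (iInf₂_le hm hcov))
    _ ≤ ∑' k, ((if k < F.card then r ^ n else 0) + r ^ n * r ^ k) := by
        refine ENNReal.tsum_le_tsum fun k => ?_
        rw [hpow]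
        by_cases hk : k < F.card <;> simp [m, hk, pow_add]
    _ = F.card * r ^ n + r ^ n * (1 - r)⁻¹ := by
        rw [ENNReal.tsum_add, ENNReal.tsum_mul_left, ENNReal.tsum_geometric,
          tsum_eq_sum (s := Finset.range F.card) fun k hk => if_neg (by simpa using hk),
          Finset.sum_ite_of_true fun k hk => Finset.mem_range.1 hk, Finset.sum_const,
          Finset.card_range, nsmul_eq_mul]
    _ = _ := by ring

theorem exists_ppMLim_zero_eq_zero [Nonempty X] (hX : TotallyBounded (univ : Set X))
    (Z : Set X) {ε : ℝ} (hε : 0 < ε) : ∃ s₀, ppMLim T (fun _ => 0) Z s₀ ε = 0 := by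
  obtain ⟨m, hm⟩ := exists_isSpanningSet_card_le_pow (T := T) hX hε
  set r := ENNReal.ofReal (Real.exp (-Real.log (2 * (m + 1))))
  have hmr : ((m : ℝ≥0∞) + 1) * r = 2⁻¹ := by
    have h : ((m : ℝ) + 1) * Real.exp (-Real.log (2 * (m + 1))) = 2⁻¹ := by
      rw [Real.exp_neg, Real.exp_log (by positivity)]
      field_simp
    rw [← ENNReal.ofReal_natCast, ← ENNReal.ofReal_one, ← ENNReal.ofReal_add (by positivity)
      zero_le_one, ← ENNReal.ofReal_mul (by positivity), h, ENNReal.ofReal_inv_of_pos two_pos,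
      ENNReal.ofReal_ofNat]
  have hr : r ≤ 2⁻¹ := hmr ▸ le_mul_of_one_le_left' le_add_self
  refine ⟨Real.log (2 * (m + 1)), ENNReal.iSup_eq_zero.2 fun N => ?_⟩
  have hbound (n : ℕ) (hn : N ≤ n) : ppM T (fun _ => 0) Z (Real.log (2 * (m + 1))) ε N ≤
      3 * 2⁻¹ ^ n := by
    obtain ⟨F, hF, hcard⟩ := hm n
    have hcard' : (F.card : ℝ≥0∞) ≤ ((m : ℝ≥0∞) + 1) ^ n := by
      exact_mod_cast hcard.trans (Nat.pow_le_pow_left (Nat.le_succ m) n)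
    have hgeom : (1 - r)⁻¹ ≤ 2 := by
      simpa [ENNReal.one_sub_inv_two] using ENNReal.inv_le_inv.2 (tsub_le_tsub_left hr 1)
    calc ppM T (fun _ => 0) Z (Real.log (2 * (m + 1))) ε N ≤ (F.card + (1 - r)⁻¹) * r ^ n :=
          ppM_zero_le_of_isSpanningSet hn fun y _ => hF (mem_univ y)
      _ = F.card * r ^ n + (1 - r)⁻¹ * r ^ n := add_mul _ _ _
      _ ≤ ((m + 1) * r) ^ n + 2 * 2⁻¹ ^ n := by
          rw [mul_pow]
          gcongr
      _ = 3 * 2⁻¹ ^ n := by rw [hmr]; ring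
  have hlim : Tendsto (fun n : ℕ => (3 : ℝ≥0∞) * 2⁻¹ ^ n) atTop (𝓝 0) := by
    simpa using ENNReal.Tendsto.const_mul
      (ENNReal.tendsto_pow_atTop_nhds_zero_of_lt_one (by norm_num)) (Or.inr (by norm_num))
  exact nonpos_iff_eq_zero.1 (ge_of_tendsto hlim (eventually_atTop.2 ⟨N, hbound⟩))

end BowenCovers

theorem entropy_distribution_principle_general [MetricSpace X] [CompactSpace X]
    [MeasurableSpace X] [BorelSpace X]
    (T : X → X) (hT : Continuous T) (Z : Set X)
    (μ : ℕ → ProbabilityMeasure X) (ν : ProbabilityMeasure X)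
    (hconv : Filter.Tendsto μ Filter.atTop (𝓝 ν))
    (ε : ℝ) (hε : 0 < ε) (s : ℝ) (K : ℝ) (N : ℕ)
    (hbound : ∀ x : X, ∀ n : ℕ, N ≤ n → (bowenBall T n x ε ∩ Z).Nonempty →
      Filter.atTop.limsup (fun k : ℕ => (μ k : Measure X) (bowenBall T n x ε)) ≤
        ENNReal.ofReal (K * Real.exp (-s * n)))
    (hν : 0 < (ν : Measure X) Z) :
    s ≤ bowenEntropyAt T Z ε := by
  have : Nonempty X := (nonempty_of_measure_ne_zero hν.ne').nonempty
  obtain ⟨s₀, hs₀⟩ := exists_ppMLim_zero_eq_zero (T := T) isCompact_univ.totallyBounded Z hε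
  have hmass : (ν : Measure X) Z / ENNReal.ofReal K ≤ ppM T (fun _ => 0) Z s ε N :=
    measure_div_le_ppM _ fun x n hn hmeet =>
      (ProbabilityMeasure.le_liminf_measure_open_of_tendsto hconv (isOpen_bowenBall hT n x ε)).trans
        (le_trans liminf_le_limsup (hbound x n hn hmeet))
  refine le_csInf ⟨s₀, hs₀⟩ fun s' (hs' : ppMLim T (fun _ => 0) Z s' ε = 0) => ?_
  by_contra! hlt
  have hzero : (ν : Measure X) Z / ENNReal.ofReal K = 0 :=
    nonpos_iff_eq_zero.1 <| hmass.trans <| (ppM_antitone _ Z ε N hlt.le).trans <|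
      hs' ▸ ppM_le_ppMLim _ Z s' ε N
  exact hν.ne' (by simpa [ENNReal.div_eq_zero_iff] using hzero)

/-- **Entropy Distribution Principle.** If `ν` is a weak-* limit of Borel probability
measures `μ k` satisfying `limsup_k μ_k(B_n(x, ε)) ≤ K exp(-s n)` for every Bowen ball of
order `n ≥ N` meeting `Z`, and `ν Z > 0`, then `h_top^B(Z, ε) ≥ s`. -/
theorem entropy_distribution_principle [MetricSpace X] [CompactSpace X]
    [MeasurableSpace X] [BorelSpace X]
    (T : X → X) (hT : Continuous T) (Z : Set X)
    (μ : ℕ → ProbabilityMeasure X) (ν : ProbabilityMeasure X)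
    (hconv : Filter.Tendsto μ Filter.atTop (𝓝 ν))
    (ε : ℝ) (hε : 0 < ε) (s : ℝ) (hs : 0 ≤ s) (K : ℝ) (hK : 0 < K) (N : ℕ)
    (hbound : ∀ x : X, ∀ n : ℕ, N ≤ n → (bowenBall T n x ε ∩ Z).Nonempty →
      Filter.atTop.limsup (fun k : ℕ => (μ k : Measure X) (bowenBall T n x ε)) ≤
        ENNReal.ofReal (K * Real.exp (-s * n)))
    (hν : 0 < (ν : Measure X) Z) :
    s ≤ bowenEntropyAt T Z ε :=
  entropy_distribution_principle_general T hT Z μ ν hconv ε hε s K N hbound hν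
end

section
/- Let T : X → X be continuous and f : X → ℝ positive continuous. If E is an (n,η)-spanning set for X and P = P(−s(f+1)) < 0 with n large enough that Σ_{x∈E} exp(−s·inf_{y∈B_n(x,η)} S_n(f+1)(y)) ≤ e^{nP/2}, and sη < −P/4, then Σ_{n≥N} Σ_{x∈E_n} exp(−s(n + ⌊inf_{y∈B_n(x,η)} S_n f(y) − nη⌋)) converges. -/
open Filter Topology MeasureTheory Set
open scoped ENNReal NNReal

variable {X : Type*}

/-! Since `⌊a⌋ > a - 1` and `inf S_n(f+1) ≤ inf S_n f + n` on every Bowen ball, each term is at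
most `e^{s(1 + nη)}` times the corresponding term of the pressure sum, so the `n`-th inner sum is
at most `e^s e^{n(sη + P/2)}`. As `sη < -P/4` and `P < 0`, the exponent is negative and the series
is dominated by a geometric one. -/

/-- This holds without side conditions: if `g '' B` is empty or unbounded below, both infima are the
junk value `0` and the inequality reads `0 ≤ c`. -/
theorem Real.sInf_image_add_const_le {α : Type*} (g : α → ℝ) (B : Set α) {c : ℝ} (hc : 0 ≤ c) :
    sInf ((fun y => g y + c) '' B) ≤ sInf (g '' B) + c := by
  have himage : (fun y => g y + c) '' B = (fun t => t + c) '' (g '' B) := by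
    rw [Set.image_image]
  rw [himage]
  rcases (g '' B).eq_empty_or_nonempty with hempty | hne
  · simp [hempty, hc]
  by_cases hbdd : BddBelow (g '' B)
  · exact ((OrderIso.addRight c).map_csInf' hne hbdd).ge
  · have hbdd' : ¬BddBelow ((fun t => t + c) '' (g '' B)) :=
      fun h => hbdd ((OrderIso.addRight c).bddBelow_image.mp h)
    rw [Real.sInf_of_not_bddBelow hbdd, Real.sInf_of_not_bddBelow hbdd', zero_add]
    exact hc

theorem birkhoffSum_add_const {α M : Type*} [AddCommMonoid M] (T : α → α) (g : α → M) (c : M)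
    (n : ℕ) (x : α) : birkhoffSum T (fun y => g y + c) n x = birkhoffSum T g n x + n • c := by
  simp [birkhoffSum, Finset.sum_add_distrib]

theorem exp_neg_mul_add_floor_sInf_le {α : Type*} {s : ℝ} (hs : 0 ≤ s) (g : α → ℝ) (B : Set α)
    (n : ℕ) (η : ℝ) :
    Real.exp (-s * (n + ⌊sInf (g '' B) - n * η⌋)) ≤
      Real.exp (s * (1 + n * η)) * Real.exp (-s * sInf ((fun y => g y + n) '' B)) := by
  have hshift := Real.sInf_image_add_const_le g B n.cast_nonneg
  have hfloor := Int.sub_one_lt_floor (sInf (g '' B) - n * η)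
  rw [← Real.exp_add, Real.exp_le_exp]
  nlinarith

theorem sum_exp_neg_mul_add_floor_sInf_le {α : Type*} {T : α → α} {f : α → ℝ} {s η P : ℝ}
    (hs : 0 ≤ s) {n : ℕ} {B : α → Set α} {E : Finset α}
    (hE : ∑ x ∈ E, Real.exp (-s *
      sInf ((fun y => birkhoffSum T (fun z => f z + 1) n y) '' B x)) ≤ Real.exp (n * P / 2)) :
    ∑ x ∈ E, Real.exp (-s * (n + ⌊sInf ((fun y => birkhoffSum T f n y) '' B x) - n * η⌋)) ≤
      Real.exp s * Real.exp (n * (s * η + P / 2)) := by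
  have hshift : (fun y => birkhoffSum T (fun z => f z + 1) n y) =
      fun y => birkhoffSum T f n y + n := by
    simp only [birkhoffSum_add_const, nsmul_eq_mul, mul_one]
  rw [hshift] at hE
  calc _ ≤ ∑ x ∈ E, Real.exp (s * (1 + n * η)) *
          Real.exp (-s * sInf ((fun y => birkhoffSum T f n y + n) '' B x)) :=
        Finset.sum_le_sum fun x _ => exp_neg_mul_add_floor_sInf_le hs _ (B x) n η
    _ ≤ Real.exp (s * (1 + n * η)) * Real.exp (n * P / 2) := by
        rw [← Finset.mul_sum]
        gcongr
    _ = Real.exp s * Real.exp (n * (s * η + P / 2)) := by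
        rw [← Real.exp_add, ← Real.exp_add]
        ring_nf

theorem upper_bound_summable_general [MetricSpace X]
    (T : X → X) (f : X → ℝ)
    (s η P : ℝ) (hs : 0 < s)
    (hPneg : P < 0)
    (hsη : s * η < -P / 4) (N : ℕ) (E : ℕ → Finset X)
    (hE : ∀ n, N ≤ n → IsSpanningSet T n η (E n) Set.univ ∧
      ∑ x ∈ E n, Real.exp (-s *
          sInf ((fun y => birkhoffSum T (fun z => f z + 1) n y) '' bowenBall T n x η)) ≤
        Real.exp (n * P / 2)) :
    Summable (fun j : ℕ => ∑ x ∈ E (j + N), Real.exp (-s * ((j + N : ℕ) +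
      (⌊sInf ((fun y => birkhoffSum T f (j + N) y) '' bowenBall T (j + N) x η) -
        (j + N : ℕ) * η⌋ : ℤ)))) := by
  have hrate : s * η + P / 2 < 0 := by linarith
  have hgeom : Summable fun j : ℕ => Real.exp s * Real.exp ((j + N : ℕ) * (s * η + P / 2)) :=
    ((summable_nat_add_iff N).mpr (Real.summable_exp_nat_mul_iff.mpr hrate)).mul_left _
  refine hgeom.of_nonneg_of_le (fun j => Finset.sum_nonneg fun x _ => (Real.exp_pos _).le)
    fun j => ?_
  exact sum_exp_neg_mul_add_floor_sInf_le hs.le (hE (j + N) (Nat.le_add_left N j)).2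

/-- **Summability in the upper bound estimate.** Suppose `P = P(-s(f+1)) < 0`, `s > 0`,
`η > 0` with `s η < -P/4`, and for every `n ≥ N` the `(n, η)`-spanning set `E n` of `X`
satisfies `Σ_{x ∈ E n} exp(-s inf_{y ∈ B_n(x,η)} S_n(f+1)(y)) ≤ e^{nP/2}`. Then
`Σ_{n ≥ N} Σ_{x ∈ E n} exp(-s (n + ⌊inf_{y ∈ B_n(x,η)} S_n f(y) − n η⌋))` converges. -/
theorem upper_bound_summable [MetricSpace X] [CompactSpace X]
    (T : X → X) (hT : Continuous T) (f : X → ℝ) (hf : Continuous f)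
    (hfpos : ∀ x, 0 < f x) (s η P : ℝ) (hs : 0 < s) (hη : 0 < η)
    (hP : P = classPressure T (fun x => -s * (f x + 1))) (hPneg : P < 0)
    (hsη : s * η < -P / 4) (N : ℕ) (E : ℕ → Finset X)
    (hE : ∀ n, N ≤ n → IsSpanningSet T n η (E n) Set.univ ∧
      ∑ x ∈ E n, Real.exp (-s *
          sInf ((fun y => birkhoffSum T (fun z => f z + 1) n y) '' bowenBall T n x η)) ≤
        Real.exp (n * P / 2)) :
    Summable (fun j : ℕ => ∑ x ∈ E (j + N), Real.exp (-s * ((j + N : ℕ) +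
      (⌊sInf ((fun y => birkhoffSum T f (j + N) y) '' bowenBall T (j + N) x η) -
        (j + N : ℕ) * η⌋ : ℤ)))) :=
  upper_bound_summable_general T f s η P hs hPneg hsη N E hE
end
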